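/- arXiv:2301.01961 — 2 statements merged into one kernel-verified Lean document; each statement's English description precedes it below -/
import Mathlib

section
/- Let n, d, m, k be positive integers with m a positive multiple of d. Then every monomial in variables x_0, ..., x_n, y, where each x_i has weight 1 and y has weight d, whose total weighted degree equals m + d·k, is divisible by some monomial of weighted degree exactly d·k. -/
lemma exists_le_sum_eq {n : ℕ} (a : Fin n → ℕ) (N : ℕ) (h : N ≤ ∑ i, a i) :
    ∃ a' : Fin n → ℕ, (∀ i, a' i ≤ a i) ∧ (∑ i, a' i) = N := by
  induction N with
  | zero => exact ⟨0, fun i => Nat.zero_le _, by simp⟩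
  | succ N ih =>
    obtain ⟨a', hle, hsum⟩ := ih (Nat.le_of_succ_le h)
    have hlt : ∑ i, a' i < ∑ i, a i := by omega
    have : ∃ i, a' i < a i := by
      by_contra hc
      push_neg at hc
      exact absurd (Finset.sum_le_sum fun i _ => hc i) (not_le.mpr hlt)
    obtain ⟨i, hi⟩ := this
    refine ⟨Function.update a' i (a' i + 1), fun j => ?_, ?_⟩
    · rcases eq_or_ne j i with rfl | hj
      · simp; omega
      · simp [Function.update_of_ne hj]; exact hle j
    · rw [Finset.sum_update_of_mem (Finset.mem_univ i)]
      rw [← Finset.sum_erase_add _ _ (Finset.mem_univ i)] at hsum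
      simp [Finset.sdiff_singleton_eq_erase] at *
      omega

/-- Every monomial `x_0^{a 0} ⋯ x_n^{a n} · y^b` of weighted degree `m + d*k`
(where the `x_i` have weight 1 and `y` has weight `d`, and `m` is a positive
multiple of `d`) is divisible by some monomial of weighted degree exactly `d*k`. -/
theorem stmt_0 (n d m k : ℕ) (hd : 0 < d) (hm : 0 < m) (hk : 0 < k)
    (hdm : d ∣ m) (a : Fin (n + 1) → ℕ) (b : ℕ)
    (hdeg : (∑ i, a i) + d * b = m + d * k) :
    ∃ (a' : Fin (n + 1) → ℕ) (b' : ℕ),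
      (∀ i, a' i ≤ a i) ∧ b' ≤ b ∧ (∑ i, a' i) + d * b' = d * k := by
  by_cases hb : k ≤ b
  · exact ⟨0, k, fun i => Nat.zero_le _, hb, by simp⟩
  · push_neg at hb
    obtain ⟨t, rfl⟩ := hdm
    have ht : 1 ≤ t := by nlinarith
    have h : d * (k - b) ≤ ∑ i, a i := by
      have : d * (k - b) + d * b ≤ d * t + d * k := by
        rw [← Nat.mul_add, Nat.sub_add_cancel hb.le]; nlinarith
      omega
    obtain ⟨a', hle, hsum⟩ := exists_le_sum_eq a (d * (k - b)) h
    refine ⟨a', b, hle, le_refl _, ?_⟩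
    rw [hsum, ← Nat.mul_add, Nat.sub_add_cancel hb.le]
end

section
/- Let n ≥ 1 and k ≥ 1 be integers. Every monomial in variables x_1, ..., x_n, y, z, where each x_i has weight 1, y has weight 2, and z has weight 3, whose total weighted degree equals 6 + 6k, is divisible by some monomial of weighted degree exactly 6k. -/
/-- From a tuple with sum at least `m`, one can decrease entries to lower the sum by
exactly `m`. -/
lemma exists_sub_sum (n : ℕ) (m : ℕ) (a : Fin n → ℕ) (hm : m ≤ ∑ i, a i) :
    ∃ a' : Fin n → ℕ, (∀ i, a' i ≤ a i) ∧ (∑ i, a' i) = (∑ i, a i) - m := by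
  induction m with
  | zero => exact ⟨a, fun i => le_rfl, by simp⟩
  | succ m ih =>
    obtain ⟨a', h1, h2⟩ := ih (le_of_lt (Nat.lt_of_lt_of_le (Nat.lt_succ_self m) hm))
    have hpos : 0 < ∑ i, a' i := by omega
    obtain ⟨j, hj⟩ : ∃ j, 0 < a' j := by
      by_contra h
      push_neg at h
      simp only [Nat.le_zero] at h
      rw [Finset.sum_eq_zero (fun i _ => h i)] at hpos
      exact lt_irrefl 0 hpos
    refine ⟨Function.update a' j (a' j - 1), fun i => ?_, ?_⟩
    · rcases eq_or_ne i j with rfl | h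
      · simp only [Function.update_self]; exact le_trans (Nat.sub_le _ _) (h1 i)
      · simp only [Function.update_of_ne h]; exact h1 i
    · rw [Finset.sum_update_of_mem (Finset.mem_univ j), ← Finset.erase_eq]
      have h3 := Finset.add_sum_erase Finset.univ a' (Finset.mem_univ j)
      omega

/-- Every monomial `x_1^{a 1} ⋯ x_n^{a n} · y^b · z^c` of weighted degree `6 + 6k`
(where the `x_i` have weight 1, `y` has weight 2 and `z` has weight 3) is divisible
by some monomial of weighted degree exactly `6k`. -/
theorem stmt_1 (n k : ℕ) (hn : 1 ≤ n) (hk : 1 ≤ k)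
    (a : Fin n → ℕ) (b c : ℕ)
    (hdeg : (∑ i, a i) + 2 * b + 3 * c = 6 + 6 * k) :
    ∃ (a' : Fin n → ℕ) (b' c' : ℕ),
      (∀ i, a' i ≤ a i) ∧ b' ≤ b ∧ c' ≤ c ∧
      (∑ i, a' i) + 2 * b' + 3 * c' = 6 * k := by
  set A := ∑ i, a i with hA
  by_cases h6 : 6 ≤ A
  · obtain ⟨a', h1, h2⟩ := exists_sub_sum n 6 a h6
    exact ⟨a', b, c, h1, le_rfl, le_rfl, by omega⟩
  · push_neg at h6
    by_cases hc2 : 2 ≤ c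
    · exact ⟨a, b, c - 2, fun i => le_rfl, le_rfl, Nat.sub_le _ _, by omega⟩
    · interval_cases c
      · -- c = 0 : b ≥ 3
        have hb : 3 ≤ b := by omega
        exact ⟨a, b - 3, 0, fun i => le_rfl, Nat.sub_le _ _, le_rfl, by omega⟩
      · -- c = 1
        by_cases hA3 : 3 ≤ A
        · obtain ⟨a', h1, h2⟩ := exists_sub_sum n 3 a hA3
          exact ⟨a', b, 0, h1, le_rfl, by omega, by omega⟩
        · have hA1 : 1 ≤ A := by omega
          have hb : 1 ≤ b := by omega
          obtain ⟨a', h1, h2⟩ := exists_sub_sum n 1 a hA1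
          exact ⟨a', b - 1, 0, h1, Nat.sub_le _ _, by omega, by omega⟩
end
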